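/- arXiv:0808.0552 — 2 statements merged into one kernel-verified Lean document; each statement's English description precedes it below -/
import Mathlib

section
/- Let V be an n-dimensional real inner product space and H a symmetric endomorphism of V. Define J(H) on the k-th exterior power Λ^k V* by J(H)(α₁∧…∧α_k) = Σ_{i=1}^k α₁∧…∧(α_i ∘ H)∧…∧α_k. Then J(H) composed with the Hodge star ⋆ satisfies ⋆∘J(H) + J(H)∘⋆ = Tr(H)·⋆ (as operators from Λ^k V* to Λ^{n-k} V*). -/
open scoped BigOperators

noncomputable section

variable {V : Type*} [NormedAddCommGroup V] [InnerProductSpace ℝ V]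

/-- Wedge product of real-valued alternating forms, via `domCoprod`. -/
def wedgeForm {k l : ℕ} (ω : V [⋀^Fin k]→ₗ[ℝ] ℝ) (η : V [⋀^Fin l]→ₗ[ℝ] ℝ) :
    V [⋀^Fin (k + l)]→ₗ[ℝ] ℝ :=
  ((TensorProduct.lid ℝ ℝ).toLinearMap.compAlternatingMap
    (ω.domCoprod η)).domDomCongr finSumFinEquiv

/-- The inner product on `k`-forms induced by an orthonormal basis `b` of `V`:
`⟨ω,η⟩ = (1/k!) Σ_f ω(b∘f)·η(b∘f)`. -/
def formInner {n k : ℕ} (b : OrthonormalBasis (Fin n) ℝ V)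
    (ω η : V [⋀^Fin k]→ₗ[ℝ] ℝ) : ℝ :=
  (k.factorial : ℝ)⁻¹ *
    ∑ f : Fin k → Fin n, ω (fun i => b (f i)) * η (fun i => b (f i))

/-! The operator `J(H)` is a derivation of the wedge product, and on top-degree forms it is
multiplication by `Tr(H)` (evaluate on a basis: only the diagonal entries of `H` survive).
Hence `Jω ∧ ξ + ω ∧ Jξ = Tr(H) ω ∧ ξ` whenever `deg ω + deg ξ = n`. For symmetric `H`,
`J(H)` is self-adjoint for the inner product of forms, so with `ξ = ⋆η`
`ω ∧ (⋆Jη + J⋆η - Tr(H) ⋆η) = (⟨ω, Jη⟩ - ⟨Jω, η⟩) vol = 0` for every `k`-form `ω`.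
The pairing `(ω, ξ) ↦ ω ∧ ξ` is nondegenerate in `ξ`, because `⋆` is injective (`⟨η, η⟩ > 0`)
between spaces of the same dimension `(n choose k) = (n choose n - k)`, so it is onto. -/

open scoped RealInnerProductSpace

theorem Fintype.sum_sum_update_comm {ι α β : Type*} [Fintype ι] [DecidableEq ι] [Fintype α]
    [DecidableEq α] [AddCommMonoid β] (i : ι) (G : (ι → α) → (ι → α) → β) :
    ∑ g, ∑ a, G g (Function.update g i a) = ∑ g, ∑ a, G (Function.update g i a) g := by
  have hinv : Function.Involutive fun p : (ι → α) × α => (Function.update p.1 i p.2, p.1 i) :=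
    fun p => by simp
  simp only [← Fintype.sum_prod_type']
  exact Fintype.sum_equiv (hinv.toPerm _) _ _ fun p => by simp

namespace MultilinearMap

variable {R M N ι : Type*} [CommSemiring R] [AddCommMonoid M] [Module R M]
  [AddCommMonoid N] [Module R N] [Fintype ι] [DecidableEq ι]

/-- The operator `J(f)` of the statement, on multilinear maps. -/
def derivationExt (f : M →ₗ[R] M) :
    MultilinearMap R (fun _ : ι => M) N →ₗ[R] MultilinearMap R (fun _ : ι => M) N :=
  ∑ i : ι, compLinearMapₗ (Function.update (fun _ => LinearMap.id) i f)

theorem derivationExt_apply (f : M →ₗ[R] M) (m : MultilinearMap R (fun _ : ι => M) N)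
    (v : ι → M) : derivationExt f m v = ∑ i, m (Function.update v i (f (v i))) := by
  simp only [derivationExt, LinearMap.sum_apply, sum_apply, compLinearMapₗ_apply,
    compLinearMap_apply]
  refine Finset.sum_congr rfl fun i _ => congrArg m (funext fun j => ?_)
  rcases eq_or_ne j i with rfl | hj <;> simp [*]

theorem derivationExt_domDomCongr {ι' : Type*} [Fintype ι'] [DecidableEq ι'] (f : M →ₗ[R] M)
    (σ : ι ≃ ι') (m : MultilinearMap R (fun _ : ι => M) N) :
    derivationExt f (m.domDomCongr σ) = (derivationExt f m).domDomCongr σ := by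
  ext v
  simp only [derivationExt_apply, domDomCongr_apply]
  refine Fintype.sum_equiv σ.symm _ _ fun i => ?_
  change m (Function.update v i (f (v i)) ∘ σ) = _
  rw [Function.update_comp_equiv, σ.apply_symm_apply]
  rfl

theorem derivationExt_domCoprod {ι₁ ι₂ N₁ N₂ : Type*} [Fintype ι₁] [DecidableEq ι₁]
    [Fintype ι₂] [DecidableEq ι₂] [AddCommMonoid N₁] [Module R N₁] [AddCommMonoid N₂]
    [Module R N₂] (f : M →ₗ[R] M) (a : MultilinearMap R (fun _ : ι₁ => M) N₁)
    (b : MultilinearMap R (fun _ : ι₂ => M) N₂) :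
    derivationExt f (a.domCoprod b) =
      (derivationExt f a).domCoprod b + a.domCoprod (derivationExt f b) := by
  ext v
  simp only [derivationExt_apply, add_apply, domCoprod_apply, Fintype.sum_sum_type,
    TensorProduct.sum_tmul, TensorProduct.tmul_sum]
  congr 1 <;> refine Finset.sum_congr rfl fun i _ => ?_ <;> congr 2 <;> funext j <;>
    simp [Function.update_apply]

variable {N' : Type*} [AddCommGroup N'] [Module R N']

theorem derivationExt_alternatization (f : M →ₗ[R] M)
    (m : MultilinearMap R (fun _ : ι => M) N') :
    derivationExt f (alternatization m : MultilinearMap R (fun _ : ι => M) N') =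
      alternatization (derivationExt f m) := by
  rw [alternatization_coe, alternatization_coe, _root_.map_sum]
  refine Finset.sum_congr rfl fun σ _ => ?_
  rw [Units.smul_def, Units.smul_def, map_zsmul, derivationExt_domDomCongr]

end MultilinearMap

namespace AlternatingMap

variable {R M N ι : Type*} [CommSemiring R] [AddCommMonoid M] [Module R M]
  [AddCommGroup N] [Module R N] [Fintype ι] [DecidableEq ι]

theorem derivationExt_map_eq_zero_of_eq (f : M →ₗ[R] M) (τ : M [⋀^ι]→ₗ[R] N) {v : ι → M}
    {i j : ι} (hv : v i = v j) (hij : i ≠ j) :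
    MultilinearMap.derivationExt f (τ : MultilinearMap R (fun _ : ι => M) N) v = 0 := by
  have h_other : ∀ l, l ≠ i ∧ l ≠ j → τ (Function.update v l (f (v l))) = 0 := by
    rintro l ⟨hli, hlj⟩
    refine τ.map_eq_zero_of_eq _ ?_ hij
    rwa [Function.update_of_ne hli.symm, Function.update_of_ne hlj.symm]
  rw [MultilinearMap.derivationExt_apply, coe_multilinearMap, Fintype.sum_eq_add i j hij h_other]
  -- swapping the two equal entries exchanges the surviving terms up to sign
  have hswap :
      Function.update v j (f (v j)) ∘ Equiv.swap i j = Function.update v i (f (v i)) := by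
    rw [Equiv.comp_swap_eq_update]
    simp [Function.update_of_ne hij, hv]
  simpa [hswap] using τ.map_swap_add (Function.update v j (f (v j))) hij

def derivationExt (f : M →ₗ[R] M) : (M [⋀^ι]→ₗ[R] N) →ₗ[R] M [⋀^ι]→ₗ[R] N where
  toFun τ :=
    { MultilinearMap.derivationExt f (τ : MultilinearMap R (fun _ : ι => M) N) with
      map_eq_zero_of_eq' := fun _ _ _ hv hij => derivationExt_map_eq_zero_of_eq f τ hv hij }
  map_add' τ τ' := by ext; simp [MultilinearMap.derivationExt_apply, Finset.sum_add_distrib]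
  map_smul' c τ := by ext; simp [MultilinearMap.derivationExt_apply, Finset.smul_sum]

@[simp]
theorem coe_derivationExt (f : M →ₗ[R] M) (τ : M [⋀^ι]→ₗ[R] N) :
    (derivationExt f τ : MultilinearMap R (fun _ : ι => M) N) =
      MultilinearMap.derivationExt f (τ : MultilinearMap R (fun _ : ι => M) N) :=
  rfl

theorem derivationExt_apply (f : M →ₗ[R] M) (τ : M [⋀^ι]→ₗ[R] N) (v : ι → M) :
    derivationExt f τ v = ∑ i, τ (Function.update v i (f (v i))) :=
  MultilinearMap.derivationExt_apply f _ v

theorem derivationExt_domDomCongr {ι' : Type*} [Fintype ι'] [DecidableEq ι'] (f : M →ₗ[R] M)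
    (σ : ι ≃ ι') (τ : M [⋀^ι]→ₗ[R] N) :
    derivationExt f (τ.domDomCongr σ) = (derivationExt f τ).domDomCongr σ :=
  coe_multilinearMap_injective <| by
    simpa [coe_domDomCongr] using
      MultilinearMap.derivationExt_domDomCongr f σ (τ : MultilinearMap R (fun _ : ι => M) N)

theorem derivationExt_compAlternatingMap {N₂ : Type*} [AddCommGroup N₂] [Module R N₂]
    (f : M →ₗ[R] M) (g : N →ₗ[R] N₂) (τ : M [⋀^ι]→ₗ[R] N) :
    derivationExt f (g.compAlternatingMap τ) = g.compAlternatingMap (derivationExt f τ) := by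
  ext v
  simp [derivationExt_apply]

theorem derivationExt_eq_trace_smul {R M : Type*} [CommRing R] [AddCommGroup M] [Module R M]
    (b : Module.Basis ι R M) (f : M →ₗ[R] M) (τ : M [⋀^ι]→ₗ[R] R) :
    derivationExt f τ = LinearMap.trace R M f • τ := by
  have h_basis : derivationExt f τ b = LinearMap.trace R M f * τ b := by
    rw [derivationExt_apply, LinearMap.trace_eq_matrix_trace R b, Matrix.trace, Finset.sum_mul]
    refine Finset.sum_congr rfl fun i _ => ?_
    conv_lhs => rw [← b.sum_repr (f (b i)), map_update_sum]
    rw [Finset.sum_eq_single i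
      (fun j _ hji => by rw [map_update_smul, map_update_self _ _ hji.symm, smul_zero]) (by simp)]
    simp [map_update_smul, LinearMap.toMatrix_apply]
  rw [(derivationExt f τ).eq_smul_basis_det b, h_basis, mul_smul, ← τ.eq_smul_basis_det b]

theorem derivationExt_domCoprod {K M ιa ιb N₁ N₂ : Type*} [Field K] [CharZero K]
    [AddCommMonoid M] [Module K M] [Fintype ιa] [DecidableEq ιa] [Fintype ιb] [DecidableEq ιb]
    [AddCommGroup N₁] [Module K N₁] [AddCommGroup N₂] [Module K N₂] (f : M →ₗ[K] M)
    (a : M [⋀^ιa]→ₗ[K] N₁) (b : M [⋀^ιb]→ₗ[K] N₂) :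
    derivationExt f (a.domCoprod b) =
      (derivationExt f a).domCoprod b + a.domCoprod (derivationExt f b) := by
  -- `domCoprod` is an alternatization up to the factor `|ιa|! |ιb|!`, which is invertible in `K`
  set c := (Fintype.card ιa).factorial * (Fintype.card ιb).factorial
  have h : c • derivationExt f (a.domCoprod b) =
      c • ((derivationExt f a).domCoprod b + a.domCoprod (derivationExt f b)) := by
    rw [← map_nsmul, smul_add, ← MultilinearMap.domCoprod_alternization_eq,
      ← MultilinearMap.domCoprod_alternization_eq, ← MultilinearMap.domCoprod_alternization_eq,
      ← map_add]
    apply coe_multilinearMap_injective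
    rw [coe_derivationExt, MultilinearMap.derivationExt_alternatization, coe_derivationExt,
      coe_derivationExt, MultilinearMap.derivationExt_domCoprod]
  have hc : (c : K) ≠ 0 := by simp [c, Nat.factorial_ne_zero]
  rw [← Nat.cast_smul_eq_nsmul K, ← Nat.cast_smul_eq_nsmul K] at h
  exact smul_right_injective _ hc h

section FiniteDimensional

variable {K M : Type*} [Field K] [AddCommGroup M] [Module K M] [FiniteDimensional K M] (k : ℕ)

instance finiteDimensional_fin {N : Type*} [AddCommGroup N] [Module K N]
    [FiniteDimensional K N] : FiniteDimensional K (M [⋀^Fin k]→ₗ[K] N) :=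
  exteriorPower.alternatingMapLinearEquiv.symm.finiteDimensional

theorem finrank_fin_eq_choose :
    Module.finrank K (M [⋀^Fin k]→ₗ[K] K) = (Module.finrank K M).choose k := by
  rw [exteriorPower.alternatingMapLinearEquiv.finrank_eq, Module.finrank_linearMap_self,
    exteriorPower.finrank_eq]

end FiniteDimensional

end AlternatingMap

section Symmetric

variable {ι κ : Type*} [Fintype ι] [DecidableEq ι] [Fintype κ] [DecidableEq κ]
  {H : V →ₗ[ℝ] V}

theorem sum_map_update_mul_comm (b : OrthonormalBasis κ ℝ V) (hH : H.IsSymmetric)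
    (ω η : MultilinearMap ℝ (fun _ : ι => V) ℝ) (i : ι) :
    ∑ g : ι → κ, ω (Function.update (b ∘ g) i (H (b (g i)))) * η (b ∘ g) =
      ∑ g : ι → κ, ω (b ∘ g) * η (Function.update (b ∘ g) i (H (b (g i)))) := by
  have expand : ∀ (μ : MultilinearMap ℝ (fun _ : ι => V) ℝ) (g : ι → κ),
      μ (Function.update (b ∘ g) i (H (b (g i)))) =
        ∑ a, ⟪b a, H (b (g i))⟫ * μ (b ∘ Function.update g i a) := by
    intro μ g
    conv_lhs => rw [← b.sum_repr' (H (b (g i))), μ.map_update_sum]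
    simp [μ.map_update_smul, Function.comp_update]
  have swap := Fintype.sum_sum_update_comm i
    fun g g' : ι → κ => ⟪b (g' i), H (b (g i))⟫ * ω (b ∘ g') * η (b ∘ g)
  simp only [Function.update_self] at swap
  simp only [expand, Finset.sum_mul, Finset.mul_sum, swap]
  refine Finset.sum_congr rfl fun g _ => Finset.sum_congr rfl fun a _ => ?_
  rw [← hH, real_inner_comm (b a)]
  ring

theorem sum_derivationExt_mul_comm (b : OrthonormalBasis κ ℝ V) (hH : H.IsSymmetric)
    (ω η : MultilinearMap ℝ (fun _ : ι => V) ℝ) :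
    ∑ g : ι → κ, MultilinearMap.derivationExt H ω (b ∘ g) * η (b ∘ g) =
      ∑ g : ι → κ, ω (b ∘ g) * MultilinearMap.derivationExt H η (b ∘ g) := by
  simp only [MultilinearMap.derivationExt_apply, Finset.sum_mul, Finset.mul_sum]
  rw [Finset.sum_comm]
  conv_rhs => rw [Finset.sum_comm]
  exact Finset.sum_congr rfl fun i _ => sum_map_update_mul_comm b hH ω η i

end Symmetric

section Forms

variable {k l n : ℕ}

theorem derivationExt_wedgeForm (H : V →ₗ[ℝ] V) (ω : V [⋀^Fin k]→ₗ[ℝ] ℝ)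
    (ξ : V [⋀^Fin l]→ₗ[ℝ] ℝ) :
    AlternatingMap.derivationExt H (wedgeForm ω ξ) =
      wedgeForm (AlternatingMap.derivationExt H ω) ξ +
        wedgeForm ω (AlternatingMap.derivationExt H ξ) := by
  rw [wedgeForm, AlternatingMap.derivationExt_domDomCongr,
    AlternatingMap.derivationExt_compAlternatingMap, AlternatingMap.derivationExt_domCoprod,
    LinearMap.compAlternatingMap_add, AlternatingMap.domDomCongr_add, wedgeForm, wedgeForm]

def wedgeTop (hkn : k + l = n) (ω : V [⋀^Fin k]→ₗ[ℝ] ℝ) :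
    (V [⋀^Fin l]→ₗ[ℝ] ℝ) →ₗ[ℝ] V [⋀^Fin n]→ₗ[ℝ] ℝ :=
  (AlternatingMap.domDomCongrₗ ℝ (finCongr hkn)).toLinearMap ∘ₗ
    (AlternatingMap.domDomCongrₗ ℝ finSumFinEquiv).toLinearMap ∘ₗ
      (TensorProduct.lid ℝ ℝ).toLinearMap.compAlternatingMapₗ ℝ ∘ₗ
        AlternatingMap.domCoprod' ∘ₗ TensorProduct.mk ℝ _ _ ω

theorem wedgeTop_apply (hkn : k + l = n) (ω : V [⋀^Fin k]→ₗ[ℝ] ℝ) (ξ : V [⋀^Fin l]→ₗ[ℝ] ℝ) :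
    wedgeTop hkn ω ξ = (wedgeForm ω ξ).domDomCongr (finCongr hkn) :=
  rfl

theorem wedgeTop_derivationExt_add (hkn : k + l = n) (b : Module.Basis (Fin n) ℝ V)
    (H : V →ₗ[ℝ] V) (ω : V [⋀^Fin k]→ₗ[ℝ] ℝ) (ξ : V [⋀^Fin l]→ₗ[ℝ] ℝ) :
    wedgeTop hkn (AlternatingMap.derivationExt H ω) ξ +
        wedgeTop hkn ω (AlternatingMap.derivationExt H ξ) =
      LinearMap.trace ℝ V H • wedgeTop hkn ω ξ := by
  rw [wedgeTop_apply, wedgeTop_apply, wedgeTop_apply, ← AlternatingMap.domDomCongr_add,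
    ← derivationExt_wedgeForm, ← AlternatingMap.derivationExt_domDomCongr,
    AlternatingMap.derivationExt_eq_trace_smul b]

theorem formInner_derivationExt_left {H : V →ₗ[ℝ] V} (b : OrthonormalBasis (Fin n) ℝ V)
    (hH : H.IsSymmetric) (ω η : V [⋀^Fin k]→ₗ[ℝ] ℝ) :
    formInner b (AlternatingMap.derivationExt H ω) η =
      formInner b ω (AlternatingMap.derivationExt H η) :=
  congrArg (_ * ·) <|
    sum_derivationExt_mul_comm b hH (ω : MultilinearMap ℝ (fun _ : Fin k => V) ℝ) η

theorem eq_zero_of_formInner_self_eq_zero (b : OrthonormalBasis (Fin n) ℝ V)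
    {ω : V [⋀^Fin k]→ₗ[ℝ] ℝ} (h : formInner b ω ω = 0) : ω = 0 := by
  have hsum : ∑ f : Fin k → Fin n, ω (fun i => b (f i)) * ω (fun i => b (f i)) = 0 := by
    simpa [formInner, Nat.factorial_ne_zero] using h
  rw [Finset.sum_eq_zero_iff_of_nonneg fun f _ => mul_self_nonneg _] at hsum
  refine AlternatingMap.coe_multilinearMap_injective <|
    Module.Basis.ext_multilinear (fun _ => b.toBasis) fun f => ?_
  simpa using hsum f (Finset.mem_univ f)

def IsHodgeStar (hkn : k + l = n) [Fact (Module.finrank ℝ V = n)]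
    (o : Orientation ℝ V (Fin n)) (b : OrthonormalBasis (Fin n) ℝ V)
    (star : (V [⋀^Fin k]→ₗ[ℝ] ℝ) →ₗ[ℝ] V [⋀^Fin l]→ₗ[ℝ] ℝ) : Prop :=
  ∀ ω η, wedgeTop hkn ω (star η) = formInner b ω η • o.volumeForm

namespace IsHodgeStar

variable {hkn : k + l = n} [Fact (Module.finrank ℝ V = n)] {o : Orientation ℝ V (Fin n)}
  {b : OrthonormalBasis (Fin n) ℝ V} {star : (V [⋀^Fin k]→ₗ[ℝ] ℝ) →ₗ[ℝ] V [⋀^Fin l]→ₗ[ℝ] ℝ}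

theorem eq_zero_of_wedgeTop_self_eq_zero (h : IsHodgeStar hkn o b star)
    {η : V [⋀^Fin k]→ₗ[ℝ] ℝ} (hη : wedgeTop hkn η (star η) = 0) : η = 0 := by
  have hvol : o.volumeForm ≠ 0 := fun h0 => by
    simpa [h0] using o.abs_volumeForm_apply_of_orthonormal b
  rw [h η η, smul_eq_zero] at hη
  exact eq_zero_of_formInner_self_eq_zero b (hη.resolve_right hvol)

theorem injective (h : IsHodgeStar hkn o b star) : Function.Injective star :=
  (injective_iff_map_eq_zero star).mpr fun η hη =>
    h.eq_zero_of_wedgeTop_self_eq_zero (by rw [hη, map_zero])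

theorem surjective [FiniteDimensional ℝ V] (h : IsHodgeStar hkn o b star) :
    Function.Surjective star := by
  refine (LinearMap.injective_iff_surjective_of_finrank_eq_finrank ?_).mp h.injective
  rw [AlternatingMap.finrank_fin_eq_choose,
    AlternatingMap.finrank_fin_eq_choose, Fact.out (p := Module.finrank ℝ V = n),
    ← hkn, Nat.choose_symm_add]

theorem eq_of_forall_wedgeTop_eq [FiniteDimensional ℝ V] (h : IsHodgeStar hkn o b star)
    {ξ₁ ξ₂ : V [⋀^Fin l]→ₗ[ℝ] ℝ} (hξ : ∀ ω, wedgeTop hkn ω ξ₁ = wedgeTop hkn ω ξ₂) :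
    ξ₁ = ξ₂ := by
  obtain ⟨ζ, hζ⟩ := h.surjective (ξ₁ - ξ₂)
  obtain rfl : ζ = 0 := h.eq_zero_of_wedgeTop_self_eq_zero (by rw [hζ, map_sub, hξ, sub_self])
  rwa [map_zero, eq_comm, sub_eq_zero] at hζ

end IsHodgeStar

end Forms

/-- for a symmetric endomorphism `H` of the oriented
`n`-dimensional inner product space `V`, the derivation extension `J(H)` to
`k`-forms satisfies `⋆∘J(H) + J(H)∘⋆ = Tr(H)·⋆` as operators
`Λ^k V* → Λ^{n−k} V*`, where `⋆` is the Hodge star (characterized by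
`ω ∧ ⋆η = ⟨ω,η⟩ vol`). -/
theorem hodgeStar_J_anticommutator
    (n k : ℕ) (hk : k ≤ n) [FiniteDimensional ℝ V]
    [Fact (Module.finrank ℝ V = n)]
    (o : Orientation ℝ V (Fin n)) (b : OrthonormalBasis (Fin n) ℝ V)
    (H : V →ₗ[ℝ] V) (hH : LinearMap.IsSymmetric H)
    (Jk : (V [⋀^Fin k]→ₗ[ℝ] ℝ) →ₗ[ℝ] (V [⋀^Fin k]→ₗ[ℝ] ℝ))
    (hJk : ∀ (ω : V [⋀^Fin k]→ₗ[ℝ] ℝ) (v : Fin k → V),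
      Jk ω v = ∑ i : Fin k, ω (Function.update v i (H (v i))))
    (Jnk : (V [⋀^Fin (n - k)]→ₗ[ℝ] ℝ) →ₗ[ℝ] (V [⋀^Fin (n - k)]→ₗ[ℝ] ℝ))
    (hJnk : ∀ (ω : V [⋀^Fin (n - k)]→ₗ[ℝ] ℝ) (v : Fin (n - k) → V),
      Jnk ω v = ∑ i : Fin (n - k), ω (Function.update v i (H (v i))))
    (star : (V [⋀^Fin k]→ₗ[ℝ] ℝ) →ₗ[ℝ] (V [⋀^Fin (n - k)]→ₗ[ℝ] ℝ))
    (hstar : ∀ ω η : V [⋀^Fin k]→ₗ[ℝ] ℝ,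
      (wedgeForm ω (star η)).domDomCongr (finCongr (by omega)) =
        formInner b ω η • o.volumeForm) :
    star ∘ₗ Jk + Jnk ∘ₗ star = LinearMap.trace ℝ V H • star := by
  have hkn : k + (n - k) = n := by omega
  have h_star : IsHodgeStar hkn o b star := hstar
  obtain rfl : Jk = AlternatingMap.derivationExt H := LinearMap.ext fun ω =>
    AlternatingMap.ext fun v => by rw [hJk, AlternatingMap.derivationExt_apply]
  obtain rfl : Jnk = AlternatingMap.derivationExt H := LinearMap.ext fun ξ =>
    AlternatingMap.ext fun v => by rw [hJnk, AlternatingMap.derivationExt_apply]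
  refine LinearMap.ext fun η => ?_
  rw [LinearMap.add_apply, LinearMap.comp_apply, LinearMap.comp_apply, LinearMap.smul_apply,
    ← eq_sub_iff_add_eq]
  refine h_star.eq_of_forall_wedgeTop_eq fun ω => ?_
  rw [h_star, ← formInner_derivationExt_left b hH, ← h_star, map_sub, map_smul,
    eq_sub_iff_add_eq, wedgeTop_derivationExt_add hkn b.toBasis]
end
end

section
/- Define sequences a_{2i+1}, b_{2i} (for integers i ≥ 1) by a₁ = (−1)^{k+1}/(2k−n), b₂ = 1/(2(2k−n)), a_{2i+1} = (2(−1)^{k+1} b_{2i} + a_{2i−1})/(2(i+1)(2k+2i−n)), b_{2i} = (2(−1)^{k+1} a_{2i−1} + b_{2i−2})/(2i(2k+2i−n)), together with a_{2i} = 1/(2^i i! ∏_{j=1}^i(2k+2j−n)). Then b_{2i} = 1/(2^i i! ∏_{j=0}^{i−1}(2k+2j−n)) and a_{2i+1} = (−1)^{k+1}/(2^i i! ∏_{j=0}^{i}(2k+2j−n)) satisfy the above recursions, for all i with 2i ≤ n−2k−2. -/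
open scoped BigOperators

/-- the sequences defined by
`a₁ = (−1)^{k+1}/(2k−n)`, `b₂ = 1/(2(2k−n))`,
`a_{2i+1} = (2(−1)^{k+1} b_{2i} + a_{2i−1})/(2(i+1)(2k+2i−n))`,
`b_{2i} = (2(−1)^{k+1} a_{2i−1} + b_{2i−2})/(2i(2k+2i−n))`,
together with `a_{2i} = 1/(2^i i! ∏_{j=1}^i (2k+2j−n))`, satisfy the closed
forms `b_{2i} = 1/(2^i i! ∏_{j=0}^{i−1}(2k+2j−n))` and
`a_{2i+1} = (−1)^{k+1}/(2^i i! ∏_{j=0}^{i}(2k+2j−n))` for all `i` with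
`2i ≤ n−2k−2`. -/
theorem coeff_odd_closed_form (n k : ℤ) (hk : 2 * k < n) (a b : ℕ → ℝ)
    (ha1 : a 1 = (-1 : ℝ) ^ (k + 1) / ((2 * k : ℝ) - n))
    (hb2 : b 2 = 1 / (2 * ((2 * k : ℝ) - n)))
    (ha : ∀ i : ℕ, 1 ≤ i → a (2 * i + 1) =
      (2 * (-1 : ℝ) ^ (k + 1) * b (2 * i) + a (2 * i - 1)) /
        (2 * ((i : ℝ) + 1) * ((2 * k : ℝ) + 2 * i - n)))
    (hb : ∀ i : ℕ, 2 ≤ i → b (2 * i) =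
      (2 * (-1 : ℝ) ^ (k + 1) * a (2 * i - 1) + b (2 * i - 2)) /
        (2 * (i : ℝ) * ((2 * k : ℝ) + 2 * i - n)))
    (haeven : ∀ i : ℕ, 1 ≤ i → a (2 * i) =
      1 / (2 ^ i * (i.factorial : ℝ) *
        ∏ j ∈ Finset.Icc 1 i, ((2 * k : ℝ) + 2 * j - n))) :
    ∀ i : ℕ, 1 ≤ i → (2 * i : ℤ) ≤ n - 2 * k - 2 →
      b (2 * i) = 1 / (2 ^ i * (i.factorial : ℝ) *
          ∏ j ∈ Finset.range i, ((2 * k : ℝ) + 2 * j - n)) ∧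
      a (2 * i + 1) = (-1 : ℝ) ^ (k + 1) / (2 ^ i * (i.factorial : ℝ) *
          ∏ j ∈ Finset.range (i + 1), ((2 * k : ℝ) + 2 * j - n)) := by
  set c : ℝ := (-1 : ℝ) ^ (k + 1) with hc
  have hc2 : c * c = 1 := by
    rw [hc, ← zpow_add₀ (by norm_num : (-1:ℝ) ≠ 0)]
    have : (k + 1) + (k + 1) = 2 * (k + 1) := by ring
    rw [this, zpow_mul]
    norm_num
  intro i hi
  induction i, hi using Nat.le_induction with
  | base =>
    intro h2i
    have hf0 : ((2 * k : ℝ) - n) ≠ 0 := by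
      have h : ((2 * k - n : ℤ) : ℝ) ≠ 0 := Int.cast_ne_zero.mpr (by omega)
      push_cast at h; exact h
    have hf1 : ((2 * k : ℝ) + 2 - n) ≠ 0 := by
      have h : ((2 * k + 2 - n : ℤ) : ℝ) ≠ 0 := Int.cast_ne_zero.mpr (by omega)
      push_cast at h; exact h
    constructor
    · rw [show 2 * 1 = 2 from rfl, hb2]
      simp [Finset.prod_range_one]
    · have h := ha 1 (le_refl 1)
      norm_num at h
      rw [h, hb2, ha1]
      rw [Finset.prod_range_succ, Finset.prod_range_one]
      push_cast
      simp only [Nat.factorial_one, Nat.cast_one, mul_zero, add_zero, mul_one, pow_one]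
      field_simp
      ring
  | succ i hi ih =>
    intro h2i
    have h2i' : (2 * i : ℤ) ≤ n - 2 * k - 2 := by push_cast at h2i ⊢; omega
    obtain ⟨ihb, iha⟩ := ih h2i'
    have hfne : ∀ j : ℕ, (j : ℤ) ≤ i + 1 → ((2 * k : ℝ) + 2 * j - n) ≠ 0 := by
      intro j hj
      have h : ((2 * k + 2 * j - n : ℤ) : ℝ) ≠ 0 := by
        refine Int.cast_ne_zero.mpr ?_
        push_cast at h2i; omega
      push_cast at h; exact h
    have hP : (∏ j ∈ Finset.range i, ((2 * k : ℝ) + 2 * j - n)) ≠ 0 := by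
      apply Finset.prod_ne_zero_iff.2
      intro j hj
      exact hfne j (by exact_mod_cast le_of_lt (lt_of_lt_of_le (Finset.mem_range.1 hj) (by omega)))
    have hfi : ((2 * k : ℝ) + 2 * i - n) ≠ 0 := hfne i (by omega)
    have hfi1 : ((2 * k : ℝ) + 2 * (i + 1 : ℕ) - n) ≠ 0 := hfne (i + 1) (by omega)
    have hfact : ((Nat.factorial i : ℝ)) ≠ 0 := by positivity
    have hii : ((i : ℝ) + 1) ≠ 0 := by positivity
    -- b step
    have hbnew : b (2 * (i + 1)) = 1 / (2 ^ (i + 1) * ((i+1).factorial : ℝ) *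
        ∏ j ∈ Finset.range (i + 1), ((2 * k : ℝ) + 2 * j - n)) := by
      have h := hb (i + 1) (by omega)
      rw [show 2 * (i + 1) - 1 = 2 * i + 1 from by omega,
        show 2 * (i + 1) - 2 = 2 * i from by omega] at h
      rw [h, iha, ihb, Finset.prod_range_succ, Nat.factorial_succ]
      push_cast at hfi1 ⊢
      field_simp
      have hP' : (∏ x ∈ Finset.range i, (2 * ((k : ℝ) + x) - n)) ≠ 0 := by
        simpa only [mul_add] using hP
      have hfi' : 2 * ((k : ℝ) + i) - n ≠ 0 := by
        rw [mul_add]; exact hfi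
      have hfi1' : 2 * ((k : ℝ) + (i + 1)) - n ≠ 0 := by
        rw [show 2 * ((k : ℝ) + (i + 1)) = 2 * k + 2 * (i + 1) by ring]; exact hfi1
      rw [show c ^ 2 = c * c from sq c, hc2]
      field_simp
      ring
    refine ⟨hbnew, ?_⟩
    have h := ha (i + 1) (by omega)
    rw [show 2 * (i + 1) - 1 = 2 * i + 1 from by omega] at h
    rw [h, hbnew, iha, Finset.prod_range_succ, Finset.prod_range_succ,
      Finset.prod_range_succ, Nat.factorial_succ]
    push_cast at hfi1 ⊢
    field_simp
    ring
end
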